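/- arXiv:1904.02764 — 4 statements merged into one kernel-verified Lean document; each statement's English description precedes it below -/
import Mathlib

section
/- Let G be a finite abelian group and let χ₁, χ₂ : G → ℂˣ be two complex irreducible characters of G. Then χ₁ and χ₂ are Galois-associated (i.e., there exists a field automorphism σ of ℂ such that χ₂ = σ ∘ χ₁) if and only if ker χ₁ = ker χ₂. -/
/-!
If `ker χ₁ = ker χ₂ = K`, both characters embed the cyclic group `G ⧸ K` into `ℂˣ`, sending a
generator to primitive `n`-th roots of unity `ζ` and `ζ ^ i` with `i` prime to `n`. These share
the minimal polynomial `Φₙ` over `ℚ`, so an automorphism of the algebraic closure of `ℚ` in `ℂ`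
maps one to the other, and it extends to `ℂ` through a transcendence basis. Conversely, a field
automorphism fixes `1` and nothing else maps to `1`, so Galois-associated characters have the same
kernel.
-/

theorem IsAlgClosed.exists_ringEquiv_extend {E L : Type*} [Field E] [Field L] [IsAlgClosed L]
    [Algebra E L] (e : E ≃+* E) :
    ∃ σ : L ≃+* L, ∀ x : E, σ (algebraMap E L x) = algebraMap E L (e x) := by
  obtain ⟨s, hs⟩ := exists_isTranscendenceBasis E L
  have := IsAlgClosed.isAlgClosure_of_transcendence_basis _ hs
  let φ := hs.1.aevalEquiv.symm.toRingEquiv.trans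
    ((MvPolynomial.mapEquiv s e).trans hs.1.aevalEquiv.toRingEquiv)
  have hφ (x : E) : φ (algebraMap E _ x) = algebraMap E _ (e x) := by
    simpa [φ] using hs.1.aevalEquiv.commutes (e x)
  refine ⟨IsAlgClosure.equivOfEquiv L L φ, fun x => ?_⟩
  have hA (x : E) : algebraMap E L x =
      algebraMap (Algebra.adjoin E (Set.range ((↑) : s → L))) L (algebraMap E _ x) := rfl
  rw [hA, IsAlgClosure.equivOfEquiv_algebraMap, hφ, ← hA]

theorem IsConjRoot.exists_algEquiv_of_isAlgClosed {K L : Type*} [Field K] [Field L]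
    [IsAlgClosed L] [Algebra K L] {x y : L} (hx : IsIntegral K x) (h : IsConjRoot K x y) :
    ∃ σ : L ≃ₐ[K] L, σ y = x := by
  let E := algebraicClosure K L
  have hy : IsIntegral K y := h.isIntegral hx
  let x' : E := ⟨x, mem_algebraicClosure_iff.mpr hx.isAlgebraic⟩
  let y' : E := ⟨y, mem_algebraicClosure_iff.mpr hy.isAlgebraic⟩
  have h' : IsConjRoot K x' y' := (isConjRoot_algHom_iff E.val).mp h
  obtain ⟨τ, hτ⟩ := h'.exists_algEquiv
  obtain ⟨σ, hσ⟩ := IsAlgClosed.exists_ringEquiv_extend (L := L) τ.toRingEquiv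
  refine ⟨AlgEquiv.ofRingEquiv (f := σ) fun k => ?_, ?_⟩
  · rw [IsScalarTower.algebraMap_apply K E L, hσ]
    simp
  · simpa [hτ] using hσ y'

theorem IsPrimitiveRoot.exists_algEquiv_apply_eq_pow {L : Type*} [Field L] [IsAlgClosed L]
    [CharZero L] {ζ : L} {n i : ℕ} (hζ : IsPrimitiveRoot ζ n) (hn : 0 < n) (hi : i.Coprime n) :
    ∃ σ : L ≃ₐ[ℚ] L, σ ζ = ζ ^ i := by
  have hζi : IsPrimitiveRoot (ζ ^ i) n := hζ.pow_of_coprime i hi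
  have hconj : IsConjRoot ℚ (ζ ^ i) ζ := by
    rw [isConjRoot_def, ← Polynomial.cyclotomic_eq_minpoly_rat hζ hn,
      ← Polynomial.cyclotomic_eq_minpoly_rat hζi hn]
  exact hconj.exists_algEquiv_of_isAlgClosed (hζi.isIntegral hn).tower_top

theorem MonoidHom.exists_ringEquiv_apply_eq_of_injective {H L : Type*} [Group H] [Finite H]
    [Field L] [IsAlgClosed L] [CharZero L] {ψ₁ ψ₂ : H →* Lˣ} (h₁ : Function.Injective ψ₁)
    (h₂ : Function.Injective ψ₂) : ∃ σ : L ≃+* L, ∀ h, (ψ₂ h : L) = σ (ψ₁ h) := by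
  have : IsCyclic H :=
    isCyclic_of_injective_ringHom ((Units.coeHom L).comp ψ₁) (Units.val_injective.comp h₁)
  obtain ⟨q, hq⟩ := IsCyclic.exists_generator (α := H)
  have : NeZero (orderOf q) := ⟨(orderOf_pos q).ne'⟩
  have hζ₁ : IsPrimitiveRoot (ψ₁ q) (orderOf q) := orderOf_injective ψ₁ h₁ q ▸ .orderOf _
  have hζ₂ : IsPrimitiveRoot (ψ₂ q) (orderOf q) := orderOf_injective ψ₂ h₂ q ▸ .orderOf _
  obtain ⟨i, -, hi, hpow⟩ := hζ₁.isPrimitiveRoot_iff'.mp hζ₂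
  obtain ⟨σ, hσ⟩ :=
    (IsPrimitiveRoot.coe_units_iff.mpr hζ₁).exists_algEquiv_apply_eq_pow (orderOf_pos q) hi
  refine ⟨σ, fun h => ?_⟩
  obtain ⟨k, rfl⟩ := hq h
  simp [← hpow, hσ]

theorem MonoidHom.exists_ringEquiv_apply_eq_of_ker_eq {G L : Type*} [Group G] [Finite G]
    [Field L] [IsAlgClosed L] [CharZero L] {χ₁ χ₂ : G →* Lˣ} (h : χ₁.ker = χ₂.ker) :
    ∃ σ : L ≃+* L, ∀ g, (χ₂ g : L) = σ (χ₁ g) := by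
  obtain ⟨σ, hσ⟩ := exists_ringEquiv_apply_eq_of_injective (QuotientGroup.kerLift_injective χ₁)
    (ψ₂ := (QuotientGroup.kerLift χ₂).comp (QuotientGroup.quotientMulEquivOfEq h).toMonoidHom)
    ((QuotientGroup.kerLift_injective χ₂).comp (QuotientGroup.quotientMulEquivOfEq h).injective)
  exact ⟨σ, fun g => hσ g⟩

/-- Two complex irreducible characters of a finite abelian group
are Galois-associated iff they have the same kernel. -/
theorem galois_associated_iff_ker_eq {G : Type*} [CommGroup G] [Fintype G]
    (χ₁ χ₂ : G →* ℂˣ) :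
    (∃ σ : ℂ ≃+* ℂ, ∀ g : G, (χ₂ g : ℂ) = σ (χ₁ g : ℂ)) ↔ χ₁.ker = χ₂.ker := by
  refine ⟨fun ⟨σ, hσ⟩ => ?_, MonoidHom.exists_ringEquiv_apply_eq_of_ker_eq⟩
  ext g
  simp only [MonoidHom.mem_ker, ← Units.val_eq_one, hσ, map_eq_one_iff σ σ.injective]
end

section
/- Let G be a finite abelian group. The map χ ↦ ker χ induces a bijection from the set of Galois-equivalence classes of complex irreducible characters of G (the quotient of the set of group homomorphisms G → ℂˣ by the relation of being Galois-associated) onto the set of subgroups K of G such that the quotient group G/K is cyclic. -/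
/-!
A character `χ` of `G` factors through an injective character of the finite cyclic group
`G ⧸ ker χ`, so it sends a generator of that quotient to a primitive root of unity of order
`n = |G ⧸ ker χ|` and is determined by it. Two primitive `n`-th roots of unity have the same
minimal polynomial over `ℚ` (the cyclotomic polynomial), hence are exchanged by an automorphism
of the algebraic closure of `ℚ` in `ℂ`, and such an automorphism extends to `ℂ` along a
transcendence basis. So characters with the same kernel are Galois-associated; the converse holds
because field automorphisms fix `1`. Finally, a cyclic group of order `n` embeds into the `n`-th
roots of unity, so every subgroup with cyclic quotient is a kernel.
-/

/-- The relation of being Galois-associated on complex characters of `G`. -/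
def galoisSetoid (G : Type*) [CommGroup G] : Setoid (G →* ℂˣ) where
  r χ₁ χ₂ := ∃ σ : ℂ ≃+* ℂ, ∀ g : G, (χ₂ g : ℂ) = σ (χ₁ g : ℂ)
  iseqv := by
    constructor
    · exact fun χ => ⟨RingEquiv.refl ℂ, fun g => rfl⟩
    · rintro χ₁ χ₂ ⟨σ, hσ⟩
      exact ⟨σ.symm, fun g => by rw [hσ g, σ.symm_apply_apply]⟩
    · rintro χ₁ χ₂ χ₃ ⟨σ, hσ⟩ ⟨τ, hτ⟩
      exact ⟨σ.trans τ, fun g => by rw [hτ g, hσ g]; rfl⟩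

namespace IsAlgClosed

variable {E K : Type*} [Field E] [Field K] [IsAlgClosed K] [Algebra E K]

theorem exists_ringEquiv_extend_s1 (τ : E ≃+* E) :
    ∃ σ : K ≃+* K, ∀ x : E, σ (algebraMap E K x) = algebraMap E K (τ x) := by
  -- `K` is an algebraic closure of the polynomial ring on a transcendence basis over `E`,
  -- on which `τ` acts coefficientwise.
  obtain ⟨s, hs⟩ := exists_isTranscendenceBasis E K
  let A := Algebra.adjoin E (Set.range ((↑) : s → K))
  have : IsAlgClosure A K := isAlgClosure_of_transcendence_basis _ hs
  let e : A ≃+* A := (hs.1.aevalEquiv.symm.toRingEquiv.trans (MvPolynomial.mapEquiv s τ)).trans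
      hs.1.aevalEquiv.toRingEquiv
  have he (x : E) : e (algebraMap E A x) = algebraMap E A (τ x) := by
    change hs.1.aevalEquiv (MvPolynomial.map τ (hs.1.aevalEquiv.symm (algebraMap E A x))) = _
    rw [AlgEquiv.commutes, MvPolynomial.algebraMap_eq, MvPolynomial.map_C,
      ← MvPolynomial.algebraMap_eq, AlgEquiv.commutes]
    rfl
  exact ⟨IsAlgClosure.equivOfEquiv K K e, fun x =>
    (IsAlgClosure.equivOfEquiv_algebraMap K K e (algebraMap E A x)).trans
      (congrArg (algebraMap A K) (he x))⟩

theorem exists_algEquiv_apply_eq_of_minpoly_eq {x y : K} (hx : IsIntegral E x)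
    (h : minpoly E x = minpoly E y) : ∃ σ : K ≃ₐ[E] K, σ x = y := by
  let L := algebraicClosure E K
  have hy : IsIntegral E y := minpoly.ne_zero_iff.mp (h ▸ minpoly.ne_zero hx)
  let x' : L := ⟨x, mem_algebraicClosure_iff.mpr hx.isAlgebraic⟩
  let y' : L := ⟨y, mem_algebraicClosure_iff.mpr hy.isAlgebraic⟩
  obtain ⟨τ, hτ⟩ : y' ∈ MulAction.orbit Gal(L/E) x' := by
    rw [← Normal.minpoly_eq_iff_mem_orbit, IntermediateField.minpoly_eq,
      IntermediateField.minpoly_eq]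
    exact h.symm
  obtain ⟨σ, hσ⟩ := exists_ringEquiv_extend_s1 (K := K) τ.toRingEquiv
  refine ⟨{ σ with commutes' := fun c => ?_ }, ?_⟩
  · simpa using hσ (algebraMap E L c)
  · simpa using (hσ x').trans (congrArg Subtype.val hτ)

end IsAlgClosed

theorem IsPrimitiveRoot.exists_ringEquiv_apply_eq {K : Type*} [Field K] [IsAlgClosed K]
    [CharZero K] {ζ ζ' : K} {m : ℕ} (hζ : IsPrimitiveRoot ζ m) (hζ' : IsPrimitiveRoot ζ' m)
    (hm : 0 < m) : ∃ σ : K ≃+* K, σ ζ = ζ' := by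
  have h : minpoly ℚ ζ = minpoly ℚ ζ' := by
    rw [← Polynomial.cyclotomic_eq_minpoly_rat hζ hm, Polynomial.cyclotomic_eq_minpoly_rat hζ' hm]
  obtain ⟨σ, hσ⟩ :=
    IsAlgClosed.exists_algEquiv_apply_eq_of_minpoly_eq (hζ.isIntegral hm).tower_top h
  exact ⟨σ, hσ⟩

theorem MonoidHom.isCyclic_quotient_ker {G R : Type*} [Group G] [Finite G] [CommRing R]
    [IsDomain R] (χ : G →* Rˣ) : IsCyclic (G ⧸ χ.ker) :=
  isCyclic_of_injective_ringHom ((Units.coeHom R).comp (QuotientGroup.kerLift χ))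
    (Units.val_injective.comp (QuotientGroup.kerLift_injective χ))

theorem IsCyclic.exists_injective_monoidHom_units (Q M : Type*) [Group Q] [Finite Q] [IsCyclic Q]
    [CommMonoid M] [HasEnoughRootsOfUnity M (Nat.card Q)] :
    ∃ ψ : Q →* Mˣ, Function.Injective ψ := by
  let e : Q ≃* rootsOfUnity (Nat.card Q) M :=
    mulEquivOfCyclicCardEq (HasEnoughRootsOfUnity.natCard_rootsOfUnity M _).symm
  exact ⟨(rootsOfUnity _ M).subtype.comp e.toMonoidHom, Subtype.val_injective.comp e.injective⟩

theorem Subgroup.exists_ker_eq_of_isCyclic_quotient {G : Type*} [Group G] (N : Subgroup G)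
    [N.Normal] [Finite (G ⧸ N)] [IsCyclic (G ⧸ N)] (M : Type*) [CommMonoid M]
    [HasEnoughRootsOfUnity M (Nat.card (G ⧸ N))] : ∃ χ : G →* Mˣ, χ.ker = N := by
  obtain ⟨ψ, hψ⟩ := IsCyclic.exists_injective_monoidHom_units (G ⧸ N) M
  exact ⟨ψ.comp (QuotientGroup.mk' N),
    by rw [MonoidHom.ker_comp_of_injective _ _ hψ, QuotientGroup.ker_mk']⟩

section GaloisConjugate

variable {K : Type*} [Field K] [IsAlgClosed K] [CharZero K]

theorem IsCyclic.exists_ringEquiv_of_injective {Q : Type*} [Group Q] [Finite Q] [IsCyclic Q]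
    {ψ₁ ψ₂ : Q →* Kˣ} (h₁ : Function.Injective ψ₁) (h₂ : Function.Injective ψ₂) :
    ∃ σ : K ≃+* K, ∀ q, (ψ₂ q : K) = σ (ψ₁ q) := by
  obtain ⟨q₀, hq₀⟩ := IsCyclic.exists_generator (α := Q)
  have hprim {ψ : Q →* Kˣ} (hψ : Function.Injective ψ) :
      IsPrimitiveRoot (ψ q₀ : K) (orderOf q₀) := by
    rw [IsPrimitiveRoot.coe_units_iff, ← orderOf_injective ψ hψ]
    exact IsPrimitiveRoot.orderOf _
  obtain ⟨σ, hσ⟩ := (hprim h₁).exists_ringEquiv_apply_eq (hprim h₂) (orderOf_pos q₀)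
  refine ⟨σ, fun q => ?_⟩
  obtain ⟨j, rfl⟩ := Subgroup.mem_zpowers_iff.mp (hq₀ q)
  simp only [map_zpow, Units.val_zpow_eq_zpow_val, map_zpow₀, hσ]

open QuotientGroup in
theorem MonoidHom.ker_eq_ker_iff_exists_ringEquiv {G : Type*} [Group G] [Finite G]
    {χ₁ χ₂ : G →* Kˣ} : χ₁.ker = χ₂.ker ↔ ∃ σ : K ≃+* K, ∀ g, (χ₂ g : K) = σ (χ₁ g) := by
  constructor
  · intro h
    have := χ₁.isCyclic_quotient_ker
    let e := quotientMulEquivOfEq h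
    obtain ⟨σ, hσ⟩ := IsCyclic.exists_ringEquiv_of_injective
      (ψ₂ := (kerLift χ₂).comp e.toMonoidHom)
      (kerLift_injective χ₁) ((kerLift_injective χ₂).comp e.injective)
    exact ⟨σ, fun g => hσ g⟩
  · rintro ⟨σ, hσ⟩
    have : χ₂ = (Units.map (σ : K →* K)).comp χ₁ := MonoidHom.ext fun g => Units.ext (hσ g)
    rw [this, ker_comp_of_injective _ _ (Units.map_injective σ.injective)]

end GaloisConjugate

/-- For a finite abelian group `G`, the map `χ ↦ ker χ` induces a
bijection from the set of Galois-equivalence classes of complex irreducible characters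
of `G` onto the set of subgroups `K ⊆ G` with `G ⧸ K` cyclic. -/
theorem galois_classes_equiv_cyclic_quotient_subgroups
    (G : Type*) [CommGroup G] [Fintype G] :
    ∃ e : Quotient (galoisSetoid G) ≃ {K : Subgroup G // IsCyclic (G ⧸ K)},
      ∀ χ : G →* ℂˣ, (e (Quotient.mk (galoisSetoid G) χ) : Subgroup G) = χ.ker := by
  let kerClass : Quotient (galoisSetoid G) → {K : Subgroup G // IsCyclic (G ⧸ K)} :=
    Quotient.lift (fun χ => ⟨χ.ker, χ.isCyclic_quotient_ker⟩) fun _ _ h =>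
      Subtype.ext (MonoidHom.ker_eq_ker_iff_exists_ringEquiv.mpr h)
  have kerClass_injective : Function.Injective kerClass :=
    Quotient.ind₂ fun _ _ h =>
      Quotient.sound (MonoidHom.ker_eq_ker_iff_exists_ringEquiv.mp (congrArg Subtype.val h))
  have kerClass_surjective : Function.Surjective kerClass := by
    rintro ⟨K, hK⟩
    obtain ⟨χ, hχ⟩ := K.exists_ker_eq_of_isCyclic_quotient ℂ
    exact ⟨Quotient.mk _ χ, Subtype.ext hχ⟩
  exact ⟨Equiv.ofBijective kerClass ⟨kerClass_injective, kerClass_surjective⟩, fun _ => rfl⟩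
end

section
/- Let G be a finite abelian group, K a subgroup of G, and θ : G → ℂˣ a group homomorphism. Then ker θ = K if and only if the following two conditions hold: (a) K ⊆ ker θ; and (b) for every subgroup H of G with K ⊆ H and [H : K] prime, H is not contained in ker θ. -/
/-!
If `K < ker θ`, some element of `ker θ / K` has prime order `p` (Cauchy); its cyclic subgroup
pulls back to an `H` with `K ≤ H ≤ ker θ` and `[H : K] = p`. Conversely `[ker θ : ker θ] = 1`
is not prime.
-/

theorem Subgroup.exists_le_prime_card {Q : Type*} [Group Q] [Finite Q] {M : Subgroup Q}
    (hM : M ≠ ⊥) : ∃ P : Subgroup Q, P ≤ M ∧ (Nat.card P).Prime := by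
  obtain ⟨p, hp, hpM⟩ := Nat.exists_prime_and_dvd (mt Subgroup.card_eq_one.mp hM)
  have := Fact.mk hp
  obtain ⟨z, hz⟩ := exists_prime_orderOf_dvd_card' p hpM
  refine ⟨Subgroup.zpowers (z : Q), Subgroup.zpowers_le.mpr z.2, ?_⟩
  rwa [Nat.card_zpowers, Subgroup.orderOf_coe, hz]

theorem Subgroup.exists_prime_relIndex_of_lt {G : Type*} [Group G] [Finite G]
    {K L : Subgroup G} [K.Normal] (hKL : K < L) :
    ∃ H : Subgroup G, K ≤ H ∧ H ≤ L ∧ (K.relIndex H).Prime := by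
  set f := QuotientGroup.mk' K
  have hfK : f.ker = K := QuotientGroup.ker_mk' K
  have hLf : L.map f ≠ ⊥ := by
    rw [Ne, Subgroup.map_eq_bot_iff, hfK]
    exact hKL.not_ge
  obtain ⟨P, hPL, hP⟩ := Subgroup.exists_le_prime_card hLf
  refine ⟨P.comap f, QuotientGroup.le_comap_mk' K P, ?_, ?_⟩
  · calc P.comap f ≤ (L.map f).comap f := Subgroup.comap_mono hPL
      _ = L := by rw [QuotientGroup.comap_map_mk', sup_eq_right.mpr hKL.le]
  · have hrel := Subgroup.relIndex_ker (P.comap f) f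
    rw [hfK, Subgroup.map_comap_eq_self_of_surjective (QuotientGroup.mk'_surjective K)] at hrel
    rwa [hrel]

/-- Let `G` be a finite abelian group, `K` a subgroup and
`θ : G → ℂˣ` a character. Then `ker θ = K` iff `K ⊆ ker θ` and for every subgroup
`H` with `K ⊆ H` and `[H : K]` prime, `H` is not contained in `ker θ`. -/
theorem ker_eq_iff_trivial_on_K_nontrivial_on_prime_overgroups
    {G : Type*} [CommGroup G] [Fintype G] (K : Subgroup G) (θ : G →* ℂˣ) :
    θ.ker = K ↔
      (K ≤ θ.ker ∧
        ∀ H : Subgroup G, K ≤ H → (K.relIndex H).Prime → ¬ H ≤ θ.ker) := by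
  constructor
  · rintro rfl
    refine ⟨le_rfl, fun H hKH hp hH => ?_⟩
    rw [le_antisymm hH hKH, Subgroup.relIndex_self] at hp
    exact Nat.not_prime_one hp
  · rintro ⟨hK, hprime⟩
    by_contra hne
    obtain ⟨H, hKH, hH, hp⟩ := Subgroup.exists_prime_relIndex_of_lt (hK.lt_of_ne (Ne.symm hne))
    exact hprime H hKH hp hH
end

section
/- Let V be a finite-dimensional complex vector space and α : V → V a linear automorphism of finite order d ≥ 1. Let 1 ≤ d₁ < d₂ < ⋯ < d_s be the distinct multiplicative orders of the eigenvalues of α. Define subspaces recursively by Y₀ := V and, for i = 1, …, s, B_i := ker(id − α^{d_i}) ∩ Y_{i−1} and Y_i := (id − α^{d_i})(Y_{i−1}) (the image of Y_{i−1} under id − α^{d_i}). Then V is the internal direct sum of B₁, …, B_s: the addition map B₁ × ⋯ × B_s → V, (v₁, …, v_s) ↦ v₁ + ⋯ + v_s, is a linear isomorphism. Moreover, for each i the eigenvalues of the restriction of α to B_i are exactly the eigenvalues of α of multiplicative order d_i. -/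
/-!
Write `β_i = α ^ d_i`. Averaging over the powers of an endomorphism `β` of finite order splits
every `β`-invariant subspace `Y` as `(ker (1 - β) ⊓ Y) ⊕ (1 - β) Y`. The `Y_i` are `α`-invariant,
so `Y_{i-1} = B_i ⊕ Y_i`, and the `B_i` are independent with `B_1 + ⋯ + B_s + Y_s = V`.
On an eigenvector with eigenvalue `μ` the map `1 - β_j` acts as the scalar `1 - μ ^ d_j`; hence
the eigenvector lies in `Y_i` exactly when `μ ^ d_j ≠ 1` for all `j ≤ i`, and in `B_i` exactly
when `d_i` is the first `d_j` with `μ ^ d_j = 1`, i.e. when `μ` has order `d_i`. In particular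
`Y_s = 0`, since otherwise it would contain an eigenvector of `α`.
-/

open Module End Finset
open LinearMap (ker range mem_ker)

namespace Module.End

section Semiring

variable {R M : Type*} [Semiring R] [AddCommMonoid M] [Module R M] {f g : End R M}
  {p : Submodule R M}

theorem pow_mem_invtSubmodule (hp : p ∈ f.invtSubmodule) (n : ℕ) : p ∈ (f ^ n).invtSubmodule := by
  induction n with
  | zero => simp [invtSubmodule.one]
  | succ n ih => rw [pow_succ, mul_eq_comp]; exact invtSubmodule.comp _ ih hp

theorem map_mem_invtSubmodule_of_commute (hp : p ∈ f.invtSubmodule) (hfg : Commute f g) :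
    p.map g ∈ f.invtSubmodule := by
  rintro _ ⟨x, hx, rfl⟩
  exact ⟨f x, hp hx, by rw [← mul_apply, ← hfg.eq, mul_apply]⟩

end Semiring

section DivisionRing

variable {K V : Type*} [DivisionRing K] [AddCommGroup V] [Module K V] {β : End K V} {d : ℕ}
  {Y : Submodule K V}

theorem map_one_sub_le (hY : Y ∈ β.invtSubmodule) : Y.map (1 - β) ≤ Y := by
  rintro _ ⟨y, hy, rfl⟩
  simpa using Y.sub_mem hy (hY hy)

/-- `∑_{k < d} β ^ k` multiplies a fixed vector by `d` and kills `(1 - β) y`. -/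
theorem disjoint_ker_one_sub_range_one_sub (hβ : β ^ d = 1) (hd : (d : K) ≠ 0) :
    Disjoint (ker (1 - β)) (range (1 - β)) := by
  rw [Submodule.disjoint_def]
  rintro x hx ⟨y, rfl⟩
  rw [mem_ker, LinearMap.sub_apply, one_apply, sub_eq_zero] at hx
  have hfix (k : ℕ) : (β ^ k) ((1 - β) y) = (1 - β) y := by
    rw [pow_apply]
    exact Function.IsFixedPt.iterate hx.symm k
  have hsum : (∑ k ∈ range d, β ^ k) ((1 - β) y) = (d : K) • (1 - β) y := by
    simp only [LinearMap.sum_apply, hfix, sum_const, card_range, Nat.cast_smul_eq_nsmul]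
  rw [← mul_apply, geom_sum_mul_neg, hβ, sub_self, LinearMap.zero_apply] at hsum
  exact (smul_eq_zero.mp hsum.symm).resolve_left hd

/-- Every `y ∈ Y` is the average `d⁻¹ ∑ β ^ k y`, fixed by `β`, plus `d⁻¹ ∑ (1 - β ^ k) y`,
which lies in `(1 - β) Y` because `1 - β ^ k = (1 - β) ∑_{j < k} β ^ j`. -/
theorem ker_one_sub_inf_sup_map_one_sub (hβ : β ^ d = 1) (hd : (d : K) ≠ 0)
    (hY : Y ∈ β.invtSubmodule) : ker (1 - β) ⊓ Y ⊔ Y.map (1 - β) = Y := by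
  refine le_antisymm (sup_le inf_le_right (map_one_sub_le hY)) fun y hy => ?_
  have hsum : ∀ n, (∑ k ∈ range n, β ^ k) y ∈ Y := fun n => by
    rw [LinearMap.sum_apply]
    exact Y.sum_mem fun k _ => pow_mem_invtSubmodule hY k hy
  have hfixed : (d : K)⁻¹ • (∑ k ∈ range d, β ^ k) y ∈ ker (1 - β) ⊓ Y := by
    refine ⟨?_, Y.smul_mem _ (hsum d)⟩
    rw [SetLike.mem_coe, mem_ker, map_smul, ← mul_apply, mul_neg_geom_sum, hβ, sub_self,
      LinearMap.zero_apply, smul_zero]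
  have hrange : ∀ k, y - (β ^ k) y ∈ Y.map (1 - β) := fun k =>
    ⟨(∑ j ∈ range k, β ^ j) y, hsum k, by rw [← mul_apply, mul_neg_geom_sum, LinearMap.sub_apply, one_apply]⟩
  have hy_eq : y = (d : K)⁻¹ • (∑ k ∈ range d, β ^ k) y +
      (d : K)⁻¹ • ∑ k ∈ range d, (y - (β ^ k) y) := by
    rw [← smul_add, sum_sub_distrib, sum_const, card_range, ← LinearMap.sum_apply,
      add_sub_cancel, ← Nat.cast_smul_eq_nsmul K, smul_smul, inv_mul_cancel₀ hd, one_smul]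
  rw [hy_eq]
  exact Submodule.add_mem_sup hfixed ((Y.map (1 - β)).smul_mem _ (sum_mem fun k _ => hrange k))

end DivisionRing

section Field

variable {K V : Type*} [Field K] [AddCommGroup V] [Module K V] {f : End K V} {μ : K} {v : V}

theorem HasEigenvector.one_sub_pow_apply (hv : f.HasEigenvector μ v) (n : ℕ) :
    (1 - f ^ n) v = (1 - μ ^ n) • v := by
  rw [LinearMap.sub_apply, one_apply, hv.pow_apply, sub_smul, one_smul]

theorem HasEigenvector.mem_ker_one_sub_pow_iff (hv : f.HasEigenvector μ v) (n : ℕ) :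
    v ∈ ker (1 - f ^ n) ↔ μ ^ n = 1 := by
  rw [mem_ker, hv.one_sub_pow_apply, smul_eq_zero, sub_eq_zero, eq_comm, or_iff_left hv.2]

theorem HasEigenvector.mem_map_one_sub_pow (hv : f.HasEigenvector μ v) {n : ℕ} (hμ : μ ^ n ≠ 1)
    {Y : Submodule K V} (hvY : v ∈ Y) : v ∈ Y.map (1 - f ^ n) :=
  ⟨(1 - μ ^ n)⁻¹ • v, Y.smul_mem _ hvY, by
    rw [map_smul, hv.one_sub_pow_apply, smul_smul, inv_mul_cancel₀ (sub_ne_zero.2 hμ.symm),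
      one_smul]⟩

theorem exists_hasEigenvector_mem_of_mem_invtSubmodule [IsAlgClosed K] [FiniteDimensional K V]
    {p : Submodule K V} (hp : p ∈ f.invtSubmodule) (hne : p ≠ ⊥) :
    ∃ μ v, f.HasEigenvector μ v ∧ v ∈ p := by
  have : Nontrivial p := Submodule.nontrivial_iff_ne_bot.mpr hne
  obtain ⟨μ, hμ⟩ := exists_eigenvalue (f.restrict hp)
  obtain ⟨w, hw, hw0⟩ := hμ.exists_hasEigenvector
  exact ⟨μ, w, ⟨eigenspace_restrict_le_eigenspace f hp μ ⟨w, hw, rfl⟩,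
    fun h => hw0 (Subtype.ext h)⟩, w.2⟩

end Field

end Module.End

section Telescope

variable {L : Type*} [Lattice L] [OrderBot L]

theorem Finset.sup_univ_sup_eq_of_sup_succ_eq :
    ∀ {s : ℕ} (B : Fin s → L) (Y : ℕ → L), (∀ i : Fin s, B i ⊔ Y (i + 1) = Y i) →
      univ.sup B ⊔ Y s = Y 0
  | 0, _, _, _ => by simp
  | s + 1, B, Y, h => by
    rw [Fin.univ_succ, sup_cons, sup_map, sup_assoc]
    refine (congrArg (B 0 ⊔ ·) ?_).trans (h 0)
    exact sup_univ_sup_eq_of_sup_succ_eq _ (fun n => Y (n + 1)) fun i => by simpa using h i.succ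

theorem Finset.supIndep_univ_of_disjoint_succ [IsModularLattice L] :
    ∀ {s : ℕ} (B : Fin s → L) (Y : ℕ → L), (∀ i : Fin s, B i ⊔ Y (i + 1) = Y i) →
      (∀ i : Fin s, Disjoint (B i) (Y (i + 1))) → (univ : Finset (Fin s)).SupIndep B
  | 0, _, _, _, _ => by simp
  | s + 1, B, Y, hsup, hdisj => by
    have hsup' : ∀ i : Fin s, B i.succ ⊔ Y (i + 1 + 1) = Y (i + 1) := fun i => by
      simpa using hsup i.succ
    rw [Fin.univ_succ, cons_eq_insert]
    refine SupIndep.insert (supIndep_map.2 (supIndep_univ_of_disjoint_succ _ (fun n => Y (n + 1))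
      hsup' fun i => by simpa using hdisj i.succ)) ?_
    rw [sup_map]
    exact (hdisj 0).mono_right
      (le_sup_left.trans_eq (sup_univ_sup_eq_of_sup_succ_eq _ (fun n => Y (n + 1)) hsup'))

end Telescope

theorem orderOf_eq_apply_iff_of_strictMono {G : Type*} [Monoid G] {s : ℕ} {ds : Fin s → ℕ}
    (hpos : ∀ i, 0 < ds i) (hmono : StrictMono ds) {x : G} (hx : ∃ j, ds j = orderOf x)
    (i : Fin s) : orderOf x = ds i ↔ x ^ ds i = 1 ∧ ∀ j < i, x ^ ds j ≠ 1 := by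
  obtain ⟨j₀, hj₀⟩ := hx
  constructor
  · intro hi
    refine ⟨hi ▸ pow_orderOf_eq_one x, fun j hji hj => ?_⟩
    exact (hmono hji).not_ge (Nat.le_of_dvd (hpos j) (hi ▸ orderOf_dvd_of_pow_eq_one hj))
  · rintro ⟨hi, hlt⟩
    have hle : j₀ ≤ i :=
      hmono.le_iff_le.mp (hj₀ ▸ Nat.le_of_dvd (hpos i) (orderOf_dvd_of_pow_eq_one hi))
    rcases hle.lt_or_eq with hj₀i | rfl
    · exact absurd (hj₀ ▸ pow_orderOf_eq_one x) (hlt j₀ hj₀i)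
    · exact hj₀.symm

structure IsRoanChain {K V : Type*} [Field K] [AddCommGroup V] [Module K V] (α : End K V)
    {s : ℕ} (ds : Fin s → ℕ) (Y : ℕ → Submodule K V) : Prop where
  zero : Y 0 = ⊤
  succ : ∀ i : Fin s, Y (i.val + 1) = Submodule.map (1 - α ^ ds i) (Y i.val)

namespace IsRoanChain

variable {K V : Type*} [Field K] [AddCommGroup V] [Module K V] {α : End K V} {s : ℕ}
  {ds : Fin s → ℕ} {Y : ℕ → Submodule K V} {d : ℕ}

theorem mem_invtSubmodule (hY : IsRoanChain α ds Y) : ∀ n ≤ s, Y n ∈ α.invtSubmodule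
  | 0, _ => hY.zero ▸ invtSubmodule.top_mem α
  | n + 1, hn => by
    rw [show Y (n + 1) = _ from hY.succ ⟨n, hn⟩]
    exact map_mem_invtSubmodule_of_commute (hY.mem_invtSubmodule n (by omega))
      ((Commute.one_right α).sub_right (Commute.self_pow α _))

theorem antitone (hY : IsRoanChain α ds Y) {m n : ℕ} (hmn : m ≤ n) (hn : n ≤ s) : Y n ≤ Y m := by
  induction n, hmn using Nat.le_induction with
  | base => exact le_rfl
  | succ n hmn ih =>
    have hns : n < s := hn
    calc Y (n + 1) = (Y n).map (1 - α ^ ds ⟨n, hns⟩) := hY.succ ⟨n, hns⟩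
      _ ≤ Y n := map_one_sub_le (pow_mem_invtSubmodule (hY.mem_invtSubmodule n hns.le) _)
      _ ≤ Y m := ih hns.le

theorem ker_inf_sup_succ (hY : IsRoanChain α ds Y) (hα : α ^ d = 1) (hd : (d : K) ≠ 0)
    (i : Fin s) : ker (1 - α ^ ds i) ⊓ Y i ⊔ Y (i + 1) = Y i := by
  rw [hY.succ]
  exact ker_one_sub_inf_sup_map_one_sub (by rw [pow_right_comm, hα, one_pow]) hd
    (pow_mem_invtSubmodule (hY.mem_invtSubmodule i i.isLt.le) _)

theorem disjoint_ker (hY : IsRoanChain α ds Y) (hα : α ^ d = 1) (hd : (d : K) ≠ 0) (j : Fin s)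
    {n : ℕ} (hjn : (j : ℕ) < n) (hn : n ≤ s) : Disjoint (ker (1 - α ^ ds j)) (Y n) := by
  refine (disjoint_ker_one_sub_range_one_sub (by rw [pow_right_comm, hα, one_pow]) hd).mono_right ?_
  calc Y n ≤ Y (j + 1) := hY.antitone hjn hn
    _ = (Y j).map (1 - α ^ ds j) := hY.succ j
    _ ≤ range (1 - α ^ ds j) := LinearMap.map_le_range

theorem mem_of_pow_ne_one (hY : IsRoanChain α ds Y) {μ : K} {v : V} (hv : α.HasEigenvector μ v) :
    ∀ n ≤ s, (∀ j : Fin s, (j : ℕ) < n → μ ^ ds j ≠ 1) → v ∈ Y n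
  | 0, _, _ => hY.zero ▸ Submodule.mem_top
  | n + 1, hn, hμ => by
    rw [show Y (n + 1) = _ from hY.succ ⟨n, hn⟩]
    exact hv.mem_map_one_sub_pow (hμ ⟨n, hn⟩ n.lt_succ_self)
      (hY.mem_of_pow_ne_one hv n (by omega) fun j hj => hμ j (by omega))

theorem mem_ker_inf_iff (hY : IsRoanChain α ds Y) (hα : α ^ d = 1) (hd : (d : K) ≠ 0) {μ : K}
    {v : V} (hv : α.HasEigenvector μ v) (i : Fin s) :
    v ∈ ker (1 - α ^ ds i) ⊓ Y i ↔ μ ^ ds i = 1 ∧ ∀ j < i, μ ^ ds j ≠ 1 := by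
  rw [Submodule.mem_inf, hv.mem_ker_one_sub_pow_iff]
  refine and_congr_right fun _ => ⟨fun hvY j hji hμ => hv.2 ?_, fun hμ =>
    hY.mem_of_pow_ne_one hv i i.isLt.le fun j hji => hμ j hji⟩
  exact Submodule.disjoint_def.mp (hY.disjoint_ker hα hd j hji i.isLt.le) v
    ((hv.mem_ker_one_sub_pow_iff _).2 hμ) hvY

theorem last_eq_bot [IsAlgClosed K] [FiniteDimensional K V] (hY : IsRoanChain α ds Y)
    (hα : α ^ d = 1) (hd : (d : K) ≠ 0) (hroots : ∀ μ, α.HasEigenvalue μ → ∃ j, μ ^ ds j = 1) :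
    Y s = ⊥ := by
  by_contra hne
  obtain ⟨μ, v, hv, hvY⟩ :=
    exists_hasEigenvector_mem_of_mem_invtSubmodule (hY.mem_invtSubmodule s le_rfl) hne
  obtain ⟨j, hj⟩ := hroots μ (hasEigenvalue_of_hasEigenvector hv)
  exact hv.2 (Submodule.disjoint_def.mp (hY.disjoint_ker hα hd j j.isLt le_rfl) v
    ((hv.mem_ker_one_sub_pow_iff _).2 hj) hvY)

end IsRoanChain

/-- (Roan's decomposition, linear-algebra form.) Let `α` be a linear
automorphism of finite order `d` of a finite-dimensional complex vector space `V`, and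
let `d₁ < ⋯ < d_s` be the distinct multiplicative orders of the eigenvalues of `α`.
With `Y₀ = V`, `B_i = ker(1 - α^{d_i}) ∩ Y_{i-1}` and `Y_i = (1 - α^{d_i})(Y_{i-1})`,
the space `V` is the internal direct sum of `B₁, …, B_s`, and the eigenvalues of the
restriction of `α` to `B_i` are exactly the eigenvalues of `α` of order `d_i`. -/
theorem roan_linear_decomposition
    {V : Type*} [AddCommGroup V] [Module ℂ V] [FiniteDimensional ℂ V]
    (α : V →ₗ[ℂ] V) (d : ℕ) (hd : 0 < d) (hα : α ^ d = 1)
    (s : ℕ) (ds : Fin s → ℕ) (hpos : ∀ i, 0 < ds i) (hmono : StrictMono ds)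
    (horders : ∀ n : ℕ,
      (∃ μ : ℂ, Module.End.HasEigenvalue α μ ∧ orderOf μ = n) ↔ ∃ i, ds i = n)
    (Y : ℕ → Submodule ℂ V) (B : Fin s → Submodule ℂ V)
    (hY0 : Y 0 = ⊤)
    (hB : ∀ i : Fin s, B i = LinearMap.ker (1 - α ^ ds i) ⊓ Y i.val)
    (hYsucc : ∀ i : Fin s, Y (i.val + 1) = Submodule.map (1 - α ^ ds i) (Y i.val)) :
    DirectSum.IsInternal B ∧
    ∀ i : Fin s, ∀ μ : ℂ,
      (∃ v ∈ B i, v ≠ 0 ∧ α v = μ • v) ↔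
        (Module.End.HasEigenvalue α μ ∧ orderOf μ = ds i) := by
  have hY : IsRoanChain α ds Y := ⟨hY0, hYsucc⟩
  have hd' : (d : ℂ) ≠ 0 := Nat.cast_ne_zero.2 hd.ne'
  have hord (μ : ℂ) (hμ : HasEigenvalue α μ) : ∃ j, ds j = orderOf μ := (horders _).1 ⟨μ, hμ, rfl⟩
  have hsup (i : Fin s) : B i ⊔ Y (i + 1) = Y i := hB i ▸ hY.ker_inf_sup_succ hα hd' i
  have hdisj (i : Fin s) : Disjoint (B i) (Y (i + 1)) :=
    hB i ▸ (hY.disjoint_ker hα hd' i i.val.lt_succ_self i.isLt).mono_left inf_le_left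
  have hYs : Y s = ⊥ := hY.last_eq_bot hα hd' fun μ hμ =>
    (hord μ hμ).imp fun j (hj : ds j = orderOf μ) => hj ▸ pow_orderOf_eq_one μ
  refine ⟨DirectSum.isInternal_submodule_of_iSupIndep_of_iSup_eq_top
    (iSupIndep_iff_supIndep_univ.2 (supIndep_univ_of_disjoint_succ B Y hsup hdisj)) ?_,
    fun i μ => ?_⟩
  · rw [← sup_univ_eq_iSup, ← sup_bot_eq (univ.sup B), ← hYs,
      sup_univ_sup_eq_of_sup_succ_eq B Y hsup, hY0]
  constructor
  · rintro ⟨v, hvB, hv0, hαv⟩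
    have hv : HasEigenvector α μ v := ⟨mem_eigenspace_iff.2 hαv, hv0⟩
    have hμ := hasEigenvalue_of_hasEigenvector hv
    rw [hB, hY.mem_ker_inf_iff hα hd' hv] at hvB
    exact ⟨hμ, (orderOf_eq_apply_iff_of_strictMono hpos hmono (hord μ hμ) i).2 hvB⟩
  · rintro ⟨hμ, hμi⟩
    obtain ⟨v, hv⟩ := hμ.exists_hasEigenvector
    refine ⟨v, ?_, hv.2, hv.apply_eq_smul⟩
    rw [hB, hY.mem_ker_inf_iff hα hd' hv]
    exact (orderOf_eq_apply_iff_of_strictMono hpos hmono (hord μ hμ) i).1 hμi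
end
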